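/- (Third Picard–Fuchs relation.) For every h > 0 one has (4h + 1)·I'_4(h) = 4h·I_0(h) + 5·I_2(h). -/

import Mathlib

open Real Set Filter intervalIntegral

/-- Right endpoint of the exterior oval: `x_max(h) = √(1 + √(1+4h))`. -/
noncomputable def xmax (h : ℝ) : ℝ := Real.sqrt (1 + Real.sqrt (1 + 4*h))

/-- Complete elliptic integral `I_i(h) = ∫_{-x_max}^{x_max} x^i √(2h + x² - x⁴/2) dx`. -/
noncomputable def ellI (i : ℕ) (h : ℝ) : ℝ :=
  ∫ x in (-xmax h)..(xmax h), x^i * Real.sqrt (2*h + x^2 - x^4/2)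

/-- Complete elliptic integral `I'_i(h) = ∫_{-x_max}^{x_max} x^i (2h + x² - x⁴/2)^{-1/2} dx`. -/
noncomputable def ellI' (i : ℕ) (h : ℝ) : ℝ :=
  ∫ x in (-xmax h)..(xmax h), x^i / Real.sqrt (2*h + x^2 - x^4/2)

/-!
Let `P(x) = 2h + x² - x⁴/2`, which vanishes at `±x_max` and is positive in between. Integrating
the exact derivatives `(x √P)' = √P + (x² - x⁴)/√P` and
`(x³ √P)' = 5x² √P - 4h x²/√P - x⁴/√P` over `[-x_max, x_max]` gives
`I₀ + I'₂ - I'₄ = 0` and `5 I₂ - 4h I'₂ - I'₄ = 0`; eliminating `I'₂` yields the relation.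
The integrals `I'ᵢ` converge because `P` has simple zeros at `±x_max`, so the integrands are
`O((x_max - |x|)^{-1/2})`.
-/

open MeasureTheory

theorem intervalIntegrable_of_norm_le_div_sqrt_sub {f : ℝ → ℝ} {a b C : ℝ} (hab : a ≤ b)
    (hf : Measurable f) (hbd : ∀ x ∈ Ioo a b, ‖f x‖ ≤ C / √(b - x)) :
    IntervalIntegrable f volume a b := by
  have hg : IntervalIntegrable (fun x ↦ C * (b - x) ^ (-(1 / 2) : ℝ)) volume a b := by
    have hrpow := intervalIntegrable_rpow' (a := 0) (b := b - a) (r := -(1 / 2)) (by norm_num)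
    have := (hrpow.comp_sub_left b).symm
    rw [sub_zero, sub_sub_cancel] at this
    exact this.const_mul C
  rw [intervalIntegrable_iff_integrableOn_Ioo_of_le hab] at hg ⊢
  refine hg.mono' hf.aestronglyMeasurable (ae_restrict_of_forall_mem measurableSet_Ioo ?_)
  intro x hx
  have hbx : 0 ≤ b - x := by linarith [hx.2]
  rw [Real.rpow_neg hbx, ← Real.sqrt_eq_rpow, ← div_eq_mul_inv]
  exact hbd x hx

theorem integral_eq_zero_of_hasDerivAt_mul_sqrt {a b : ℝ} (hab : a ≤ b) {q q' P P' F : ℝ → ℝ}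
    (hq : ∀ x, HasDerivAt q (q' x) x) (hP : ∀ x, HasDerivAt P (P' x) x)
    (ha : P a = 0) (hb : P b = 0) (hpos : ∀ x ∈ Ioo a b, 0 < P x)
    (hF : ∀ x ∈ Ioo a b, q' x * √(P x) + q x * (P' x / (2 * √(P x))) = F x)
    (hFint : IntervalIntegrable F volume a b) :
    ∫ x in a..b, F x = 0 := by
  have hcont : Continuous fun x ↦ q x * √(P x) :=
    (continuous_iff_continuousAt.2 fun x ↦ (hq x).continuousAt).mul
      (continuous_iff_continuousAt.2 fun x ↦ (hP x).continuousAt).sqrt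
  have hderiv : ∀ x ∈ Ioo a b, HasDerivAt (fun x ↦ q x * √(P x)) (F x) x := fun x hx ↦
    hF x hx ▸ (hq x).mul ((hP x).sqrt (hpos x hx).ne')
  rw [integral_eq_sub_of_hasDerivAt_of_le hab hcont.continuousOn hderiv hFint]
  simp [ha, hb]

section Duffing

variable {h : ℝ}

theorem sq_xmax : xmax h ^ 2 = 1 + √(1 + 4 * h) := Real.sq_sqrt (by positivity)

theorem xmax_pos : 0 < xmax h := Real.sqrt_pos.2 (by positivity)

theorem duffing_eq_mul (hh : 0 ≤ 1 + 4 * h) (x : ℝ) :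
    2 * h + x ^ 2 - x ^ 4 / 2 = (xmax h ^ 2 - x ^ 2) * (x ^ 2 + (√(1 + 4 * h) - 1)) / 2 := by
  have hs := Real.sq_sqrt hh
  rw [sq_xmax]
  linear_combination (-1 / 2 : ℝ) * hs

theorem duffing_xmax (hh : 0 ≤ 1 + 4 * h) : 2 * h + xmax h ^ 2 - xmax h ^ 4 / 2 = 0 := by
  rw [duffing_eq_mul hh]; ring

theorem duffing_neg_xmax (hh : 0 ≤ 1 + 4 * h) : 2 * h + (-xmax h) ^ 2 - (-xmax h) ^ 4 / 2 = 0 := by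
  rw [duffing_eq_mul hh]; ring

theorem one_lt_sqrt_one_add_four_mul (hh : 0 < h) : 1 < √(1 + 4 * h) :=
  Real.lt_sqrt_of_sq_lt (by linarith)

theorem duffing_pos (hh : 0 < h) {x : ℝ} (hx : x ∈ Ioo (-xmax h) (xmax h)) :
    0 < 2 * h + x ^ 2 - x ^ 4 / 2 := by
  have hx2 : x ^ 2 < xmax h ^ 2 := sq_lt_sq' hx.1 hx.2
  have hs := one_lt_sqrt_one_add_four_mul hh
  rw [duffing_eq_mul (by linarith)]
  have := mul_pos (sub_pos.2 hx2) (by positivity : 0 < x ^ 2 + (√(1 + 4 * h) - 1))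
  positivity

theorem mul_sub_le_duffing (hh : 0 ≤ h) {x : ℝ} (hx0 : 0 ≤ x) (hxm : x ≤ xmax h) :
    xmax h * (√(1 + 4 * h) - 1) / 2 * (xmax h - x) ≤ 2 * h + x ^ 2 - x ^ 4 / 2 := by
  have hs : 1 ≤ √(1 + 4 * h) := Real.le_sqrt_of_sq_le (by linarith)
  rw [duffing_eq_mul (by linarith)]
  have hprod : xmax h * (√(1 + 4 * h) - 1) ≤ (xmax h + x) * (x ^ 2 + (√(1 + 4 * h) - 1)) :=
    mul_le_mul (by linarith) (by nlinarith) (by linarith) (by linarith)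
  nlinarith [mul_le_mul_of_nonneg_left hprod (sub_nonneg.2 hxm)]

theorem hasDerivAt_duffing (h x : ℝ) :
    HasDerivAt (fun x ↦ 2 * h + x ^ 2 - x ^ 4 / 2) (2 * x - 2 * x ^ 3) x :=
  (((hasDerivAt_pow 2 x).const_add (2 * h)).fun_sub ((hasDerivAt_pow 4 x).div_const 2)).congr_deriv
    (by push_cast; ring)

theorem intervalIntegrable_pow_mul_sqrt_duffing (i : ℕ) :
    IntervalIntegrable (fun x ↦ x ^ i * √(2 * h + x ^ 2 - x ^ 4 / 2)) volume (-xmax h) (xmax h) :=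
  (by fun_prop : Continuous fun x : ℝ ↦ x ^ i * √(2 * h + x ^ 2 - x ^ 4 / 2)).intervalIntegrable _ _

theorem intervalIntegrable_pow_div_sqrt_duffing (hh : 0 < h) {i : ℕ} (hi : Even i) :
    IntervalIntegrable (fun x ↦ x ^ i / √(2 * h + x ^ 2 - x ^ 4 / 2)) volume
      (-xmax h) (xmax h) := by
  set m := xmax h
  set c := m * (√(1 + 4 * h) - 1) / 2
  have hm : 0 < m := xmax_pos
  have hc : 0 < c := by have := one_lt_sqrt_one_add_four_mul hh; positivity
  have hright : IntervalIntegrable (fun x ↦ x ^ i / √(2 * h + x ^ 2 - x ^ 4 / 2)) volume 0 m := by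
    refine intervalIntegrable_of_norm_le_div_sqrt_sub (C := m ^ i / √c) hm.le (by fun_prop) ?_
    intro x ⟨hx0, hxm⟩
    have hlow : 0 < c * (m - x) := mul_pos hc (sub_pos.2 hxm)
    rw [div_div, ← Real.sqrt_mul hc.le, Real.norm_of_nonneg (by positivity)]
    exact div_le_div₀ (by positivity) (pow_le_pow_left₀ hx0.le hxm.le i) (Real.sqrt_pos.2 hlow)
      (Real.sqrt_le_sqrt (mul_sub_le_duffing hh.le hx0.le hxm.le))
  have hleft := (hright.comp_sub_left 0).symm
  simp only [zero_sub, sub_zero, hi.neg_pow, even_two.neg_pow, (by decide : Even 4).neg_pow]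
    at hleft
  exact hleft.trans hright

theorem ellI'_four_eq_ellI_zero_add_ellI'_two (hh : 0 < h) :
    ellI' 4 h = ellI 0 h + ellI' 2 h := by
  have hI2 := intervalIntegrable_pow_div_sqrt_duffing hh (i := 2) (by decide)
  have hI4 := intervalIntegrable_pow_div_sqrt_duffing hh (i := 4) (by decide)
  have hI0 := intervalIntegrable_pow_mul_sqrt_duffing (h := h) 0
  have key := integral_eq_zero_of_hasDerivAt_mul_sqrt (neg_le_self xmax_pos.le)
    (q := id) (q' := fun _ ↦ 1) hasDerivAt_id (hasDerivAt_duffing h)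
    (duffing_neg_xmax (by linarith)) (duffing_xmax (by linarith)) (fun x hx ↦ duffing_pos hh hx)
    (fun x _ ↦ by simp only [id]; ring) ((hI0.add hI2).sub hI4)
  rw [integral_sub (hI0.add hI2) hI4, integral_add hI0 hI2] at key
  exact (sub_eq_zero.1 key).symm

theorem five_mul_ellI_two_eq (hh : 0 < h) :
    5 * ellI 2 h = 4 * h * ellI' 2 h + ellI' 4 h := by
  have hI2 := intervalIntegrable_pow_div_sqrt_duffing hh (i := 2) (by decide)
  have hI4 := intervalIntegrable_pow_div_sqrt_duffing hh (i := 4) (by decide)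
  have hJ2 := intervalIntegrable_pow_mul_sqrt_duffing (h := h) 2
  have hint := ((hJ2.const_mul 5).sub (hI2.const_mul (4 * h))).sub hI4
  have key := integral_eq_zero_of_hasDerivAt_mul_sqrt (neg_le_self xmax_pos.le)
    (q := fun x ↦ x ^ 3) (hasDerivAt_pow 3) (hasDerivAt_duffing h)
    (duffing_neg_xmax (by linarith)) (duffing_xmax (by linarith)) (fun x hx ↦ duffing_pos hh hx)
    ?_ hint
  · rw [integral_sub ((hJ2.const_mul 5).sub (hI2.const_mul (4 * h))) hI4,
      integral_sub (hJ2.const_mul 5) (hI2.const_mul (4 * h)),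
      intervalIntegral.integral_const_mul, intervalIntegral.integral_const_mul] at key
    unfold ellI ellI'
    linear_combination key
  · intro x hx
    have hP := duffing_pos hh hx
    have ht : √(2 * h + x ^ 2 - x ^ 4 / 2) ^ 2 = 2 * h + x ^ 2 - x ^ 4 / 2 := Real.sq_sqrt hP.le
    have ht0 : √(2 * h + x ^ 2 - x ^ 4 / 2) ≠ 0 := (Real.sqrt_pos.2 hP).ne'
    generalize √(2 * h + x ^ 2 - x ^ 4 / 2) = t at ht ht0 ⊢
    field_simp
    push_cast
    linear_combination (-2 * x ^ 2) * ht

end Duffing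

/-- Third Picard-Fuchs relation. -/
theorem picard_fuchs_three (h : ℝ) (hh : 0 < h) :
    (4*h + 1) * ellI' 4 h = 4*h * ellI 0 h + 5 * ellI 2 h := by
  linear_combination (4 * h) * ellI'_four_eq_ellI_zero_add_ellI'_two hh -
    five_mul_ellI_two_eq hh
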